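/- Let α, β, γ > 0, μ ∈ ℝ, r > 0, and fix any threshold x₀ ∈ ℝ that receivers use upon hearing no message. Then the sender's non-disclosure set N(x₀) = { y ∈ ℝ : Π(x₀, y) > Π(x̂(y), y) } is a nonempty bounded open interval (y₁, y₂) with y₁ < y₂, whose upper endpoint satisfies x̂(y₂) = x₀, i.e. y₂ = −(β x₀ + γμ)/α; the payoff difference Π(x₀, y) − Π(x̂(y), y) is zero exactly at y = y₁ and y = y₂. (Lemma 1: when r ≠ 0, in any equilibrium the non-disclosure region is an interval; the analogous statement with the roles of the endpoints exchanged holds for r < 0.) -/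

import Mathlib

open MeasureTheory intervalIntegral Set

/-- Gaussian density of `N(m, v)` evaluated at `t`. -/
noncomputable def phi (t m v : ℝ) : ℝ :=
  (2 * Real.pi * v) ^ (-(1:ℝ)/2) * Real.exp (-(t - m)^2 / (2*v))

/-- Gaussian cumulative distribution function of `N(m, v)` evaluated at `t`. -/
noncomputable def Phi (t m v : ℝ) : ℝ := ∫ s in Set.Iic t, phi s m v

lemma continuous_phi (m v : ℝ) : Continuous (fun t => phi t m v) := by
  unfold phi
  fun_prop

lemma integrable_phi {v : ℝ} (hv : 0 < v) (m : ℝ) :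
    Integrable (fun t => phi t m v) := by
  have h1 : Integrable (fun t : ℝ => Real.exp (-(1/(2*v)) * t^2)) :=
    integrable_exp_neg_mul_sq (by positivity)
  have h2 := (h1.comp_sub_right m).const_mul ((2 * Real.pi * v) ^ (-(1:ℝ)/2))
  refine h2.congr ?_
  filter_upwards with t
  unfold phi
  congr 1
  · congr 1; ring

lemma hasDerivAt_Phi {v : ℝ} (hv : 0 < v) (m x : ℝ) :
    HasDerivAt (fun t => Phi t m v) (phi x m v) x := by
  have hfun : (fun t => Phi t m v) = fun t => Phi 0 m v + ∫ s in (0:ℝ)..t, phi s m v := by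
    funext t
    rw [Phi, Phi, ← intervalIntegral.integral_Iic_sub_Iic
      ((integrable_phi hv m).integrableOn) ((integrable_phi hv m).integrableOn)]
    ring
  rw [hfun]
  exact (((continuous_phi m v).integral_hasStrictDerivAt 0 x).hasDerivAt).const_add _

lemma hasDerivAt_phi {v : ℝ} (hv : 0 < v) (m x : ℝ) :
    HasDerivAt (fun t => phi t m v) (-((x-m)/v) * phi x m v) x := by
  have hg : HasDerivAt (fun t : ℝ => -(t-m)^2 / (2*v)) (-((x-m)/v)) x := by
    have h1 : HasDerivAt (fun t : ℝ => (t-m)^2) (2*(x-m)) x := by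
      have h := ((hasDerivAt_id x).sub_const m).pow 2; simp at h; exact h
    have := (h1.neg).div_const (2*v)
    refine this.congr_deriv (Eq.symm ?_)
    field_simp
  have := (hg.exp).const_mul ((2 * Real.pi * v) ^ (-(1:ℝ)/2))
  refine this.congr_deriv (Eq.symm ?_)
  unfold phi
  ring

/-- The reduced integrand. -/
noncomputable def w (V s u : ℝ) : ℝ := u * Real.exp (u*s/V - u^2/(2*V))

lemma continuous_w (V s : ℝ) : Continuous (w V s) := by unfold w; fun_prop

lemma w_intble (V s a b : ℝ) : IntervalIntegrable (w V s) volume a b :=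
  (continuous_w V s).intervalIntegrable a b

lemma w_pos {V u : ℝ} (hu : 0 < u) (s : ℝ) : 0 < w V s u :=
  mul_pos hu (Real.exp_pos _)

lemma w_neg {V u : ℝ} (hu : u < 0) (s : ℝ) : w V s u < 0 :=
  mul_neg_of_neg_of_pos hu (Real.exp_pos _)

lemma w_nonpos {V u : ℝ} (hu : u ≤ 0) (s : ℝ) : w V s u ≤ 0 :=
  mul_nonpos_of_nonpos_of_nonneg hu (Real.exp_pos _).le

lemma w_mono {V : ℝ} (hV : 0 < V) {s₁ s₂ : ℝ} (hs : s₁ ≤ s₂) (u : ℝ) :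
    w V s₁ u ≤ w V s₂ u := by
  unfold w
  rcases le_total u 0 with h | h
  · have h1 : u*s₂ ≤ u*s₁ := by nlinarith
    have h2 : Real.exp (u*s₂/V - u^2/(2*V)) ≤ Real.exp (u*s₁/V - u^2/(2*V)) := by
      apply Real.exp_le_exp.2
      have : u*s₂/V ≤ u*s₁/V := by gcongr
      linarith
    nlinarith [Real.exp_pos (u*s₂/V - u^2/(2*V))]
  · have h1 : u*s₁ ≤ u*s₂ := by nlinarith
    have h2 : Real.exp (u*s₁/V - u^2/(2*V)) ≤ Real.exp (u*s₂/V - u^2/(2*V)) := by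
      apply Real.exp_le_exp.2
      have : u*s₁/V ≤ u*s₂/V := by gcongr
      linarith
    nlinarith [Real.exp_pos (u*s₁/V - u^2/(2*V))]

/-- The normalized payoff difference as a function of the posterior mean. -/
noncomputable def EE (V k b₀ σ σ₀ θ₂ θ : ℝ) : ℝ :=
  ∫ u in (b₀ + k*(θ - θ₂))..b₀, w V (σ*θ + σ₀) u

lemma EE_mono {V k b₀ σ σ₀ θ₂ : ℝ} (hV : 0 < V) (hk : 0 < k) (hb : 0 < b₀) (hσ : 0 < σ)
    {θa θb : ℝ} (hab : θa < θb) (hρ : b₀ + k*(θb - θ₂) ≤ 0) :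
    EE V k b₀ σ σ₀ θ₂ θa < EE V k b₀ σ σ₀ θ₂ θb := by
  set sa := σ*θa + σ₀ with hsa
  set sb := σ*θb + σ₀ with hsb
  set ρa := b₀ + k*(θa - θ₂) with hρa
  set ρb := b₀ + k*(θb - θ₂) with hρb
  have hsab : sa ≤ sb := by rw [hsa, hsb]; nlinarith
  have hρab : ρa < ρb := by rw [hρa, hρb]; nlinarith
  have hEa : EE V k b₀ σ σ₀ θ₂ θa
      = (∫ u in ρa..ρb, w V sa u) + ((∫ u in ρb..(0:ℝ), w V sa u) + ∫ u in (0:ℝ)..b₀, w V sa u) := by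
    rw [intervalIntegral.integral_add_adjacent_intervals (w_intble ..) (w_intble ..),
      intervalIntegral.integral_add_adjacent_intervals (w_intble ..) (w_intble ..)]
    rfl
  have hEb : EE V k b₀ σ σ₀ θ₂ θb
      = (∫ u in ρb..(0:ℝ), w V sb u) + ∫ u in (0:ℝ)..b₀, w V sb u := by
    rw [intervalIntegral.integral_add_adjacent_intervals (w_intble ..) (w_intble ..)]
    rfl
  have h1 : (∫ u in ρb..(0:ℝ), w V sa u) ≤ ∫ u in ρb..(0:ℝ), w V sb u :=
    intervalIntegral.integral_mono_on hρ (w_intble ..) (w_intble ..)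
      (fun u _ => w_mono hV hsab u)
  have h2 : (∫ u in (0:ℝ)..b₀, w V sa u) ≤ ∫ u in (0:ℝ)..b₀, w V sb u :=
    intervalIntegral.integral_mono_on hb.le (w_intble ..) (w_intble ..)
      (fun u _ => w_mono hV hsab u)
  have h3 : 0 < ∫ u in ρa..ρb, -(w V sa u) := by
    apply intervalIntegral_pos_of_pos_on ((w_intble V sa ρa ρb).neg)
    · intro x hx
      have hx0 : x < 0 := lt_of_lt_of_le hx.2 hρ
      simpa using w_neg hx0 sa
    · exact hρab
  rw [intervalIntegral.integral_neg] at h3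
  linarith

noncomputable def AA (V s u : ℝ) : ℝ :=
  -V * Real.exp (u*s/V - u^2/(2*V))
    + s * Real.exp (s^2/(2*V)) * (2*Real.pi*V)^((1:ℝ)/2) * Phi (u-s) 0 V

lemma hasDerivAt_AA {V : ℝ} (hV : 0 < V) (s u : ℝ) :
    HasDerivAt (fun u => AA V s u) (w V s u) u := by
  have hV' : V ≠ 0 := ne_of_gt hV
  have h1 : HasDerivAt (fun u : ℝ => u*s/V - u^2/(2*V)) (s/V - 2*u/(2*V)) u := by
    have ha : HasDerivAt (fun u : ℝ => u*s/V) (s/V) u := by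
      simpa using ((hasDerivAt_id u).mul_const s).div_const V
    have hb : HasDerivAt (fun u : ℝ => u^2/(2*V)) (2*u/(2*V)) u := by
      have : HasDerivAt (fun u : ℝ => u^2) (2*u) u := by
        have h := (hasDerivAt_id u).pow 2; simp at h; exact h
      simpa using this.div_const (2*V)
    exact ha.sub hb
  have h2 : HasDerivAt (fun u : ℝ => Phi (u-s) 0 V) (phi (u-s) 0 V) u := by
    have := (hasDerivAt_Phi hV 0 (u-s)).comp u ((hasDerivAt_id u).sub_const s)
    simp at this; exact this
  have h3 := ((h1.exp).const_mul (-V)).add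
    (h2.const_mul (s * Real.exp (s^2/(2*V)) * (2*Real.pi*V)^((1:ℝ)/2)))
  refine h3.congr_deriv (Eq.symm ?_)
  have hpow : (2*Real.pi*V)^((1:ℝ)/2) * (2*Real.pi*V)^(-(1:ℝ)/2) = 1 := by
    rw [← Real.rpow_add (by positivity)]; norm_num
  have hphi : (2*Real.pi*V)^((1:ℝ)/2) * phi (u-s) 0 V = Real.exp (-(u-s)^2/(2*V)) := by
    unfold phi
    rw [sub_zero, ← mul_assoc, hpow, one_mul]
  have hcomb2 : s * Real.exp (s^2/(2*V)) * (2*Real.pi*V)^((1:ℝ)/2) * phi (u-s) 0 V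
      = s * Real.exp (u*s/V - u^2/(2*V)) := by
    calc s * Real.exp (s^2/(2*V)) * (2*Real.pi*V)^((1:ℝ)/2) * phi (u-s) 0 V
        = s * (Real.exp (s^2/(2*V)) * ((2*Real.pi*V)^((1:ℝ)/2) * phi (u-s) 0 V)) := by ring
      _ = s * (Real.exp (s^2/(2*V)) * Real.exp (-(u-s)^2/(2*V))) := by rw [hphi]
      _ = s * Real.exp (u*s/V - u^2/(2*V)) := by
          rw [← Real.exp_add]; congr 2; field_simp; ring
  rw [hcomb2]
  set e := Real.exp (u*s/V - u^2/(2*V)) with he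
  unfold w
  rw [← he]
  field_simp
  ring

lemma EE_closed {V : ℝ} (k b₀ σ σ₀ θ₂ : ℝ) (hV : 0 < V) (θ : ℝ) :
    EE V k b₀ σ σ₀ θ₂ θ
      = AA V (σ*θ + σ₀) b₀ - AA V (σ*θ + σ₀) (b₀ + k*(θ - θ₂)) := by
  unfold EE
  exact intervalIntegral.integral_eq_sub_of_hasDerivAt
    (fun u _ => hasDerivAt_AA hV (σ*θ + σ₀) u) (w_intble ..)

lemma continuous_EE {V : ℝ} (k b₀ σ σ₀ θ₂ : ℝ) (hV : 0 < V) :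
    Continuous (fun θ => EE V k b₀ σ σ₀ θ₂ θ) := by
  have hPhi : Continuous (fun t => Phi t 0 V) :=
    continuous_iff_continuousAt.2 (fun x => (hasDerivAt_Phi hV 0 x).continuousAt)
  have hfun : (fun θ => EE V k b₀ σ σ₀ θ₂ θ)
      = fun θ => AA V (σ*θ + σ₀) b₀ - AA V (σ*θ + σ₀) (b₀ + k*(θ - θ₂)) :=
    funext (EE_closed k b₀ σ σ₀ θ₂ hV)
  rw [hfun]
  unfold AA
  have h1 : Continuous (fun θ : ℝ => Phi (b₀ - (σ*θ + σ₀)) 0 V) := by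
    apply hPhi.comp; fun_prop
  have h2 : Continuous (fun θ : ℝ => Phi ((b₀ + k*(θ - θ₂)) - (σ*θ + σ₀)) 0 V) := by
    apply hPhi.comp; fun_prop
  fun_prop

lemma EE_zero (V k b₀ σ σ₀ θ₂ : ℝ) : EE V k b₀ σ σ₀ θ₂ θ₂ = 0 := by
  unfold EE; simp

lemma EE_pos_mid {V k b₀ σ σ₀ θ₂ θ : ℝ}
    (hρ0 : 0 ≤ b₀ + k*(θ - θ₂)) (hρb : b₀ + k*(θ - θ₂) < b₀) :
    0 < EE V k b₀ σ σ₀ θ₂ θ := by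
  apply intervalIntegral_pos_of_pos_on (w_intble ..)
  · exact fun x hx => w_pos (lt_of_le_of_lt hρ0 hx.1) _
  · exact hρb

lemma EE_neg_right {V k b₀ σ σ₀ θ₂ θ : ℝ} (hb : 0 < b₀) (hρ : b₀ < b₀ + k*(θ - θ₂)) :
    EE V k b₀ σ σ₀ θ₂ θ < 0 := by
  have h := intervalIntegral_pos_of_pos_on (w_intble V (σ*θ + σ₀) b₀ (b₀ + k*(θ - θ₂)))
    (fun x hx => w_pos (lt_trans hb hx.1) _) hρ
  unfold EE
  rw [intervalIntegral.integral_symm]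
  linarith

lemma EE_neg_low {V k b₀ σ σ₀ θ₂ θ : ℝ} (hV : 0 < V) (hb : 0 < b₀)
    (hρ : b₀ + k*(θ - θ₂) ≤ -2) (hs : σ*θ + σ₀ ≤ -2 - V*(b₀^2/2 + 1)) :
    EE V k b₀ σ σ₀ θ₂ θ < 0 := by
  set s := σ*θ + σ₀ with hsdef
  set ρ := b₀ + k*(θ - θ₂) with hρdef
  have hs0 : s ≤ 0 := by nlinarith
  have hsplit : EE V k b₀ σ σ₀ θ₂ θ
      = (∫ u in ρ..(-2:ℝ), w V s u) + ((∫ u in (-2:ℝ)..(-1:ℝ), w V s u)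
          + ((∫ u in (-1:ℝ)..(0:ℝ), w V s u) + ∫ u in (0:ℝ)..b₀, w V s u)) := by
    rw [intervalIntegral.integral_add_adjacent_intervals (w_intble ..) (w_intble ..),
      intervalIntegral.integral_add_adjacent_intervals (w_intble ..) (w_intble ..),
      intervalIntegral.integral_add_adjacent_intervals (w_intble ..) (w_intble ..)]
    rfl
  have t1 : (∫ u in ρ..(-2:ℝ), w V s u) ≤ 0 := by
    have := intervalIntegral.integral_mono_on hρ (w_intble V s ρ (-2))
      ((continuous_const (y := (0:ℝ))).intervalIntegrable ρ (-2))
      (fun u hu => w_nonpos (le_trans hu.2 (by norm_num)) s)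
    simpa using this
  have t3 : (∫ u in (-1:ℝ)..(0:ℝ), w V s u) ≤ 0 := by
    have := intervalIntegral.integral_mono_on (by norm_num : (-1:ℝ) ≤ 0) (w_intble V s (-1) 0)
      ((continuous_const (y := (0:ℝ))).intervalIntegrable (-1) 0)
      (fun u hu => w_nonpos hu.2 s)
    simpa using this
  have t4 : (∫ u in (0:ℝ)..b₀, w V s u) ≤ b₀^2/2 := by
    have hmono := intervalIntegral.integral_mono_on hb.le (w_intble V s 0 b₀)
      (continuous_id.intervalIntegrable 0 b₀)
      (fun u hu => ?_)
    · simp only [id] at hmono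
      rw [integral_id] at hmono
      calc (∫ u in (0:ℝ)..b₀, w V s u) ≤ (b₀^2 - 0^2)/2 := hmono
        _ = b₀^2/2 := by ring
    · show w V s u ≤ u
      have hu0 : 0 ≤ u := hu.1
      have hexp : u*s/V - u^2/(2*V) ≤ 0 := by
        have h1 : u*s ≤ 0 := mul_nonpos_of_nonneg_of_nonpos hu0 hs0
        have h2 : u*s/V ≤ 0 := div_nonpos_of_nonpos_of_nonneg h1 hV.le
        have h3 : 0 ≤ u^2/(2*V) := by positivity
        linarith
      have := Real.exp_le_one_iff.2 hexp
      unfold w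
      nlinarith [Real.exp_pos (u*s/V - u^2/(2*V))]
  have t2 : (∫ u in (-2:ℝ)..(-1:ℝ), w V s u) ≤ -Real.exp ((-s-2)/V) := by
    have hmono := intervalIntegral.integral_mono_on (by norm_num : (-2:ℝ) ≤ -1)
      (w_intble V s (-2) (-1))
      ((continuous_const (y := -Real.exp ((-s-2)/V))).intervalIntegrable (-2) (-1))
      (fun u hu => ?_)
    · rw [intervalIntegral.integral_const] at hmono
      calc (∫ u in (-2:ℝ)..(-1:ℝ), w V s u)
          ≤ ((-1 : ℝ) - (-2)) • (-Real.exp ((-s-2)/V)) := hmono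
        _ = -Real.exp ((-s-2)/V) := by norm_num
    · show w V s u ≤ -Real.exp ((-s-2)/V)
      obtain ⟨hu1, hu2⟩ := hu
      have h0 : -s - 2 ≤ u*s - u^2/2 := by nlinarith
      have h : (-s-2)/V ≤ (u*s - u^2/2)/V := by gcongr
      have h' : (u*s - u^2/2)/V = u*s/V - u^2/(2*V) := by ring
      have he : Real.exp ((-s-2)/V) ≤ Real.exp (u*s/V - u^2/(2*V)) :=
        Real.exp_le_exp.2 (by rw [← h']; exact h)
      unfold w
      nlinarith [Real.exp_pos (u*s/V - u^2/(2*V))]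
  have hfin : Real.exp ((-s-2)/V) ≥ b₀^2/2 + 2 := by
    have h1 : (-s-2)/V ≥ b₀^2/2 + 1 := by
      rw [ge_iff_le, le_div_iff₀ hV]
      nlinarith
    nlinarith [Real.add_one_le_exp ((-s-2)/V)]
  rw [hsplit]
  linarith

lemma core {V k b₀ σ σ₀ θ₂ : ℝ} (hV : 0 < V) (hk : 0 < k) (hb : 0 < b₀) (hσ : 0 < σ) :
    ∃ θ₁ : ℝ, θ₁ < θ₂ ∧ (∀ θ, 0 < EE V k b₀ σ σ₀ θ₂ θ ↔ θ₁ < θ ∧ θ < θ₂)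
      ∧ (∀ θ, EE V k b₀ σ σ₀ θ₂ θ = 0 ↔ θ = θ₁ ∨ θ = θ₂) := by
  set θstar := θ₂ - b₀/k with hθstar
  have hρstar : b₀ + k*(θstar - θ₂) = 0 := by rw [hθstar]; field_simp; ring_nf
  have hθstar₂ : θstar < θ₂ := by
    rw [hθstar]; have : 0 < b₀/k := by positivity
    linarith
  set θlow := min (θstar - 2/k) ((-2 - V*(b₀^2/2 + 1) - σ₀)/σ) with hθlow
  have hρlow : b₀ + k*(θlow - θ₂) ≤ -2 := by
    have h1 : θlow ≤ θstar - 2/k := min_le_left _ _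
    have h2 : k*(θlow - θ₂) ≤ k*((θstar - 2/k) - θ₂) := by
      apply mul_le_mul_of_nonneg_left _ hk.le; linarith
    have h3 : k*((θstar - 2/k) - θ₂) = -b₀ - 2 := by
      rw [hθstar]; field_simp; ring_nf
    linarith
  have hslow : σ*θlow + σ₀ ≤ -2 - V*(b₀^2/2 + 1) := by
    have h1 : θlow ≤ (-2 - V*(b₀^2/2 + 1) - σ₀)/σ := min_le_right _ _
    have h2 : σ*θlow ≤ σ*((-2 - V*(b₀^2/2 + 1) - σ₀)/σ) := by
      apply mul_le_mul_of_nonneg_left h1 hσ.le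
    have h3 : σ*((-2 - V*(b₀^2/2 + 1) - σ₀)/σ) = -2 - V*(b₀^2/2 + 1) - σ₀ := by
      rw [mul_div_cancel₀ _ (ne_of_gt hσ)]
    linarith
  have hElow : EE V k b₀ σ σ₀ θ₂ θlow < 0 := EE_neg_low hV hb hρlow hslow
  have hEstar : 0 < EE V k b₀ σ σ₀ θ₂ θstar := by
    apply EE_pos_mid (hρ0 := hρstar.ge)
    rw [hρstar]; exact hb
  have hlowstar : θlow < θstar := by
    have h1 : θlow ≤ θstar - 2/k := min_le_left _ _
    have h2k : 0 < 2/k := by positivity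
    calc θlow ≤ θstar - 2/k := h1
    _ < θstar := by linarith
  have hIVT := intermediate_value_Icc hlowstar.le
    ((continuous_EE k b₀ σ σ₀ θ₂ hV).continuousOn (s := Icc θlow θstar))
  have h0mem : (0:ℝ) ∈ Icc (EE V k b₀ σ σ₀ θ₂ θlow) (EE V k b₀ σ σ₀ θ₂ θstar) :=
    ⟨hElow.le, hEstar.le⟩
  obtain ⟨θ₁, hθ₁mem, hθ₁0⟩ := hIVT h0mem
  have hθ₁ : EE V k b₀ σ σ₀ θ₂ θ₁ = 0 := hθ₁0
  have hρle : ∀ θ, θ ≤ θstar → b₀ + k*(θ - θ₂) ≤ 0 := by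
    intro θ hθ
    have : k*(θ - θ₂) ≤ k*(θstar - θ₂) := by
      apply mul_le_mul_of_nonneg_left _ hk.le; linarith
    linarith
  have hθ₁star : θ₁ < θstar := by
    rcases lt_or_eq_of_le hθ₁mem.2 with h | h
    · exact h
    · exfalso; rw [h] at hθ₁; rw [hθ₁] at hEstar; exact lt_irrefl 0 hEstar
  have hθ₁₂ : θ₁ < θ₂ := lt_trans hθ₁star hθstar₂
  have hpos : ∀ θ, θ₁ < θ → θ < θ₂ → 0 < EE V k b₀ σ σ₀ θ₂ θ := by
    intro θ h1 h2
    rcases le_or_gt θ θstar with hle | hgt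
    · have := EE_mono (σ₀ := σ₀) hV hk hb hσ h1 (hρle θ hle)
      rw [hθ₁] at this; exact this
    · apply EE_pos_mid
      · have : 0 < k*(θ - θstar) := by
          apply mul_pos hk; linarith
        nlinarith [hρstar]
      · have : k*(θ - θ₂) < 0 := mul_neg_of_pos_of_neg hk (by linarith)
        linarith
  have hneg : ∀ θ, θ < θ₁ → EE V k b₀ σ σ₀ θ₂ θ < 0 := by
    intro θ h1
    have := EE_mono (σ₀ := σ₀) hV hk hb hσ h1 (hρle θ₁ hθ₁star.le)
    rw [hθ₁] at this; exact this
  have hneg2 : ∀ θ, θ₂ < θ → EE V k b₀ σ σ₀ θ₂ θ < 0 := by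
    intro θ h1
    apply EE_neg_right hb
    have : 0 < k*(θ - θ₂) := mul_pos hk (by linarith)
    linarith
  refine ⟨θ₁, hθ₁₂, fun θ => ⟨fun hE => ?_, fun ⟨h1, h2⟩ => hpos θ h1 h2⟩,
    fun θ => ⟨fun hE => ?_, fun h => ?_⟩⟩
  · constructor
    · by_contra h
      push_neg at h
      rcases lt_or_eq_of_le h with h' | h'
      · exact absurd hE (not_lt.2 (hneg θ h').le)
      · rw [← h'] at hθ₁; rw [hθ₁] at hE; exact lt_irrefl 0 hE
    · by_contra h
      push_neg at h
      rcases lt_or_eq_of_le h with h' | h'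
      · exact absurd hE (not_lt.2 (hneg2 θ h').le)
      · rw [h', EE_zero] at hE; exact lt_irrefl 0 hE
  · rcases lt_trichotomy θ θ₁ with h | h | h
    · exact absurd hE (ne_of_lt (hneg θ h))
    · exact Or.inl h
    · rcases lt_trichotomy θ θ₂ with h2 | h2 | h2
      · exact absurd hE (ne_of_gt (hpos θ h h2))
      · exact Or.inr h2
      · exact absurd hE (ne_of_lt (hneg2 θ h2))
  · rcases h with h | h
    · rw [h]; exact hθ₁
    · rw [h]; exact EE_zero ..

lemma payoff_reduction {V c m k : ℝ} (hV : 0 < V) (hm : 0 < m) (hc : c * m = V)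
    (hk : k = m - 1) (r θ x₀ : ℝ) :
    (r + θ) * (1 - Phi x₀ θ V) + c * phi x₀ θ V
      - ((r + θ) * (1 - Phi (-k*θ) θ V) + c * phi (-k*θ) θ V)
      = ((1/m) * (2*Real.pi*V)^(-(1:ℝ)/2) * Real.exp (-(m*(r+θ))^2/(2*V)))
        * ∫ u in (x₀ - θ + m*(r+θ))..(m*r), w V (m*(r+θ)) u := by
  have hV' : V ≠ 0 := ne_of_gt hV
  have hm' : m ≠ 0 := ne_of_gt hm
  set s := m*(r+θ) with hs
  set B : ℝ → ℝ := fun x => (r+θ) * Phi x θ V - c * phi x θ V with hBdef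
  have hB : ∀ x, HasDerivAt B ((1/m) * ((x - θ) + s) * phi x θ V) x := by
    intro x
    have h := ((hasDerivAt_Phi hV θ x).const_mul (r+θ)).sub
      ((hasDerivAt_phi hV θ x).const_mul c)
    refine h.congr_deriv (Eq.symm ?_)
    rw [hs]
    field_simp
    linear_combination (θ - x) * phi x θ V * hc
  have hcont : Continuous (fun x => (1/m) * ((x - θ) + s) * phi x θ V) := by
    have := continuous_phi θ V; fun_prop
  have h3 : B (-k*θ) - B x₀
      = ∫ x in x₀..(-k*θ), (1/m) * ((x - θ) + s) * phi x θ V := by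
    rw [intervalIntegral.integral_eq_sub_of_hasDerivAt (fun x _ => hB x)
      (hcont.intervalIntegrable _ _)]
  have h2 : (r + θ) * (1 - Phi x₀ θ V) + c * phi x₀ θ V
      - ((r + θ) * (1 - Phi (-k*θ) θ V) + c * phi (-k*θ) θ V)
      = B (-k*θ) - B x₀ := by
    rw [hBdef]; ring
  set d : ℝ := θ - s with hd
  have h4 : (∫ u in (x₀ - θ + s)..(m*r), (1/m) * (((u + d) - θ) + s) * phi (u + d) θ V)
      = ∫ x in x₀..(-k*θ), (1/m) * ((x - θ) + s) * phi x θ V := by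
    have hb1 : x₀ - θ + s = x₀ - d := by rw [hd]; ring
    have hb2 : (m*r : ℝ) = -k*θ - d := by rw [hd, hs, hk]; ring
    rw [hb1, hb2]
    have := intervalIntegral.integral_comp_add_right
      (fun x => (1/m) * ((x - θ) + s) * phi x θ V) d (a := x₀ - d) (b := -k*θ - d)
    simpa using this
  set C : ℝ := (1/m) * (2*Real.pi*V)^(-(1:ℝ)/2) * Real.exp (-s^2/(2*V)) with hC
  have h5 : ∀ u : ℝ, (1/m) * (((u + d) - θ) + s) * phi (u + d) θ V = C * w V s u := by
    intro u
    have hphi : phi (u + d) θ V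
        = (2*Real.pi*V)^(-(1:ℝ)/2) * Real.exp (-s^2/(2*V)) * Real.exp (u*s/V - u^2/(2*V)) := by
      have hargs : -((u + d) - θ)^2/(2*V) = -s^2/(2*V) + (u*s/V - u^2/(2*V)) := by
        rw [hd]; field_simp; ring
      unfold phi
      rw [hargs, Real.exp_add, ← mul_assoc]
    rw [hphi, hC]
    unfold w
    have : ((u + d) - θ) + s = u := by rw [hd]; ring
    rw [this]
    try ring
  have h6 : (∫ u in (x₀ - θ + s)..(m*r), (1/m) * (((u + d) - θ) + s) * phi (u + d) θ V)
      = C * ∫ u in (x₀ - θ + s)..(m*r), w V s u := by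
    rw [← intervalIntegral.integral_const_mul]
    exact intervalIntegral.integral_congr (fun u _ => h5 u)
  rw [h2, h3, ← h4, h6, hC]

/-- Lemma 1 (`r > 0` case): for any threshold `x₀` that receivers use upon hearing no
message, the sender's non-disclosure set `{y : Π(x₀, y) > Π(x̂(y), y)}` is a nonempty
bounded open interval `(y₁, y₂)` with upper endpoint `y₂ = −(βx₀ + γμ)/α` (so that
`x̂(y₂) = x₀`), and the payoff difference vanishes exactly at `y₁` and `y₂`. -/
theorem nondisclosure_region_is_interval (α β γ : ℝ) (hα : 0 < α) (hβ : 0 < β) (hγ : 0 < γ)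
    (μ r : ℝ) (hr : 0 < r) (x₀ : ℝ) :
    let θb : ℝ → ℝ := fun y => (α*y + γ*μ)/(α + γ)
    let V : ℝ := 1/β + 1/(α + γ)
    let Pay : ℝ → ℝ → ℝ := fun x y =>
      (r + θb y) * (1 - Phi x (θb y) V) + (1/(α + γ)) * phi x (θb y) V
    let xhat : ℝ → ℝ := fun y => -(α*y + γ*μ)/β
    ∃ y₁ y₂ : ℝ, y₁ < y₂ ∧
      {y : ℝ | Pay x₀ y > Pay (xhat y) y} = Set.Ioo y₁ y₂ ∧
      xhat y₂ = x₀ ∧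
      y₂ = -(β*x₀ + γ*μ)/α ∧
      (∀ y : ℝ, Pay x₀ y - Pay (xhat y) y = 0 ↔ y = y₁ ∨ y = y₂) := by
  intro θb V Pay xhat
  have hVeq : V = 1/β + 1/(α + γ) := rfl
  have hθbeq : ∀ y, θb y = (α*y + γ*μ)/(α + γ) := fun _ => rfl
  have hPayeq : ∀ x y, Pay x y
      = (r + θb y) * (1 - Phi x (θb y) V) + (1/(α + γ)) * phi x (θb y) V := fun _ _ => rfl
  have hxhateq : ∀ y, xhat y = -(α*y + γ*μ)/β := fun _ => rfl
  have hAG : 0 < α + γ := by linarith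
  have hV : 0 < V := by rw [hVeq]; positivity
  set m := (α + γ) * V with hm_def
  have hm : 0 < m := by positivity
  set k := (α + γ)/β with hk_def
  have hk : 0 < k := by positivity
  have hc : (1/(α + γ)) * m = V := by
    rw [hm_def]; field_simp
  have hkm : k = m - 1 := by
    rw [hk_def, hm_def, hVeq]; field_simp; ring
  have hb : 0 < m * r := by positivity
  set θ₂ := -(β*x₀)/(α + γ) with hθ₂def
  have hkθ₂ : k * θ₂ = -x₀ := by
    rw [hk_def, hθ₂def]; field_simp
  obtain ⟨θ₁, hθ₁₂, hEpos, hEzero⟩ :=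
    core (V := V) (k := k) (b₀ := m*r) (σ := m) (σ₀ := m*r) (θ₂ := θ₂) hV hk hb hm
  -- the key reduction
  have key : ∀ y : ℝ, Pay x₀ y - Pay (xhat y) y
      = ((1/m) * (2*Real.pi*V)^(-(1:ℝ)/2) * Real.exp (-(m*(r + θb y))^2/(2*V)))
        * EE V k (m*r) m (m*r) θ₂ (θb y) := by
    intro y
    have hxhat : xhat y = -k * (θb y) := by
      rw [hxhateq, hθbeq, hk_def]
      field_simp
    have hEE : EE V k (m*r) m (m*r) θ₂ (θb y)
        = ∫ u in (x₀ - θb y + m*(r + θb y))..(m*r), w V (m*(r + θb y)) u := by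
      unfold EE
      have h1 : m*r + k*(θb y - θ₂) = x₀ - θb y + m*(r + θb y) := by
        linear_combination (θb y) * hkm - hkθ₂
      have h2 : m*(θb y) + m*r = m*(r + θb y) := by ring
      rw [h1, h2]
    rw [hPayeq, hPayeq, hxhat, hEE]
    exact payoff_reduction hV hm hc hkm r (θb y) x₀
  have hCpos : ∀ y : ℝ,
      0 < (1/m) * (2*Real.pi*V)^(-(1:ℝ)/2) * Real.exp (-(m*(r + θb y))^2/(2*V)) := by
    intro y
    have h1 : (0:ℝ) < (2*Real.pi*V)^(-(1:ℝ)/2) :=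
      Real.rpow_pos_of_pos (by positivity) _
    positivity
  -- the two endpoints in y-space
  set y₁ := ((α + γ)*θ₁ - γ*μ)/α with hy₁def
  set y₂ := -(β*x₀ + γ*μ)/α with hy₂def
  have hθby₁ : θb y₁ = θ₁ := by
    rw [hθbeq, hy₁def]; field_simp; ring
  have hθby₂ : θb y₂ = θ₂ := by
    rw [hθbeq, hy₂def, hθ₂def]; field_simp; ring
  have hmono : ∀ y z : ℝ, θb y < θb z ↔ y < z := by
    intro y z
    rw [hθbeq, hθbeq, div_lt_div_iff_of_pos_right hAG]
    constructor <;> intro h <;> nlinarith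
  have hinj : ∀ y z : ℝ, θb y = θb z ↔ y = z := by
    intro y z
    constructor
    · intro h
      by_contra hne
      rcases lt_or_gt_of_ne hne with h' | h'
      · exact absurd h (ne_of_lt ((hmono y z).2 h'))
      · exact absurd h (ne_of_gt ((hmono z y).2 h'))
    · intro h; rw [h]
  have hy₁₂ : y₁ < y₂ := by
    rw [← hmono, hθby₁, hθby₂]; exact hθ₁₂
  refine ⟨y₁, y₂, hy₁₂, ?_, ?_, rfl, ?_⟩
  · ext y
    simp only [Set.mem_setOf_eq, Set.mem_Ioo]
    have h1 : Pay x₀ y > Pay (xhat y) y ↔ 0 < Pay x₀ y - Pay (xhat y) y := by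
      constructor <;> intro h <;> linarith
    rw [h1, key y]
    have h2 : 0 < ((1/m) * (2*Real.pi*V)^(-(1:ℝ)/2) * Real.exp (-(m*(r + θb y))^2/(2*V)))
        * EE V k (m*r) m (m*r) θ₂ (θb y) ↔ 0 < EE V k (m*r) m (m*r) θ₂ (θb y) := by
      constructor
      · intro h
        by_contra hne
        push_neg at hne
        nlinarith [hCpos y]
      · intro h
        exact mul_pos (hCpos y) h
    rw [h2, hEpos (θb y), ← hθby₁, ← hθby₂, hmono, hmono]
  · rw [hxhateq, hy₂def]
    field_simp
    ring
  · intro y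
    rw [key y]
    have h2 : ((1/m) * (2*Real.pi*V)^(-(1:ℝ)/2) * Real.exp (-(m*(r + θb y))^2/(2*V)))
        * EE V k (m*r) m (m*r) θ₂ (θb y) = 0 ↔ EE V k (m*r) m (m*r) θ₂ (θb y) = 0 := by
      constructor
      · intro h
        rcases mul_eq_zero.1 h with h' | h'
        · exact absurd h' (ne_of_gt (hCpos y))
        · exact h'
      · intro h; rw [h, mul_zero]
    rw [h2, hEzero (θb y), ← hθby₁, ← hθby₂, hinj, hinj]
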